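/- On forward and downward confluent models the local forcing relation coincides with the Fischer-Servi and Wijesekera forcing relations: let M = (W,≤,R,V) be a model based on a forward and downward confluent frame; let ⊩_FS be defined by recursion exactly as ⊩ except that x ⊩_FS □A iff for all x' with x ≤ x' and all y with R x' y, y ⊩_FS A, and let ⊩_W be defined by recursion exactly as ⊩ except that x ⊩_W □A iff for all x' with x ≤ x' and all y with R x' y, y ⊩_W A, and x ⊩_W ◇A iff for all x' with x ≤ x' there exists y with R x' y and y ⊩_W A. Then for every world x and every formula A: x ⊩ A iff x ⊩_FS A iff x ⊩_W A. -/
import Mathlib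

/-- Formulas of intuitionistic modal logic. -/
inductive Formula : Type where
  | atom : ℕ → Formula
  | top  : Formula
  | bot  : Formula
  | and  : Formula → Formula → Formula
  | or   : Formula → Formula → Formula
  | imp  : Formula → Formula → Formula
  | box  : Formula → Formula
  | dia  : Formula → Formula
deriving DecidableEq

/-- A model: a frame `(W, ≤, R)` together with a monotone valuation. -/
structure Model (W : Type) where
  le : W → W → Prop
  rel : W → W → Prop
  val : ℕ → W → Prop
  le_refl : ∀ x, le x x
  le_trans : ∀ x y z, le x y → le y z → le x z
  val_mono : ∀ p x y, le x y → val p x → val p y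

/-- Forward confluence: `x ≤ x'` and `R x y` yield `y'` with `R x' y'` and `y ≤ y'`. -/
def ForwardConfluent {W : Type} (M : Model W) : Prop :=
  ∀ x x' y, M.le x x' → M.rel x y → ∃ y', M.rel x' y' ∧ M.le y y'

/-- Downward confluence: `x ≤ x'` and `R x' y'` yield `y` with `R x y` and `y ≤ y'`. -/
def DownwardConfluent {W : Type} (M : Model W) : Prop :=
  ∀ x x' y', M.le x x' → M.rel x' y' → ∃ y, M.rel x y ∧ M.le y y'

/-- The local forcing relation. -/
def Force {W : Type} (M : Model W) : W → Formula → Prop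
  | x, .atom p => M.val p x
  | _, .top => True
  | _, .bot => False
  | x, .and A B => Force M x A ∧ Force M x B
  | x, .or A B => Force M x A ∨ Force M x B
  | x, .imp A B => ∀ y, M.le x y → Force M y A → Force M y B
  | x, .box A => ∀ y, M.rel x y → Force M y A
  | x, .dia A => ∃ y, M.rel x y ∧ Force M y A

/-- The Fischer-Servi forcing relation: like `Force` except for the `□` clause. -/
def ForceFS {W : Type} (M : Model W) : W → Formula → Prop
  | x, .atom p => M.val p x
  | _, .top => True
  | _, .bot => False
  | x, .and A B => ForceFS M x A ∧ ForceFS M x B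
  | x, .or A B => ForceFS M x A ∨ ForceFS M x B
  | x, .imp A B => ∀ y, M.le x y → ForceFS M y A → ForceFS M y B
  | x, .box A => ∀ x', M.le x x' → ∀ y, M.rel x' y → ForceFS M y A
  | x, .dia A => ∃ y, M.rel x y ∧ ForceFS M y A

/-- The Wijesekera forcing relation: like `Force` except for the `□` and `◇`
clauses. -/
def ForceW {W : Type} (M : Model W) : W → Formula → Prop
  | x, .atom p => M.val p x
  | _, .top => True
  | _, .bot => False
  | x, .and A B => ForceW M x A ∧ ForceW M x B
  | x, .or A B => ForceW M x A ∨ ForceW M x B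
  | x, .imp A B => ∀ y, M.le x y → ForceW M y A → ForceW M y B
  | x, .box A => ∀ x', M.le x x' → ∀ y, M.rel x' y → ForceW M y A
  | x, .dia A => ∀ x', M.le x x' → ∃ y, M.rel x' y ∧ ForceW M y A

lemma force_mono {W : Type} (M : Model W)
    (hfc : ForwardConfluent M) (hdc : DownwardConfluent M) :
    ∀ (A : Formula) (x y : W), M.le x y → Force M x A → Force M y A := by
  intro A
  induction A with
  | atom p => intro x y h hx; exact M.val_mono p x y h hx
  | top => intro x y h hx; trivial
  | bot => intro x y h hx; exact hx
  | and A B ihA ihB =>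
    intro x y h hx; exact ⟨ihA x y h hx.1, ihB x y h hx.2⟩
  | or A B ihA ihB =>
    intro x y h hx
    cases hx with
    | inl hA => exact Or.inl (ihA x y h hA)
    | inr hB => exact Or.inr (ihB x y h hB)
  | imp A B ihA ihB =>
    intro x y h hx z hz hA
    exact hx z (M.le_trans x y z h hz) hA
  | box A ih =>
    intro x y h hx z hz
    obtain ⟨w, hw, hle⟩ := hdc x y z h hz
    exact ih w z hle (hx w hw)
  | dia A ih =>
    intro x y h hx
    obtain ⟨z, hz, hA⟩ := hx
    obtain ⟨z', hz', hle⟩ := hfc x y z h hz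
    exact ⟨z', hz', ih z z' hle hA⟩

/-- On forward and downward confluent models, the local forcing relation
coincides with the Fischer-Servi and Wijesekera forcing relations. -/
theorem force_eq_forceFS_eq_forceW {W : Type} (M : Model W)
    (hfc : ForwardConfluent M) (hdc : DownwardConfluent M) :
    ∀ (x : W) (A : Formula),
      (Force M x A ↔ ForceFS M x A) ∧ (Force M x A ↔ ForceW M x A) := by
  intro x A
  induction A generalizing x with
  | atom p => exact ⟨Iff.rfl, Iff.rfl⟩
  | top => exact ⟨Iff.rfl, Iff.rfl⟩
  | bot => exact ⟨Iff.rfl, Iff.rfl⟩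
  | and A B ihA ihB =>
    exact ⟨and_congr (ihA x).1 (ihB x).1, and_congr (ihA x).2 (ihB x).2⟩
  | or A B ihA ihB =>
    exact ⟨or_congr (ihA x).1 (ihB x).1, or_congr (ihA x).2 (ihB x).2⟩
  | imp A B ihA ihB =>
    constructor
    · constructor
      · intro h y hy hA
        exact ((ihB y).1).mp (h y hy (((ihA y).1).mpr hA))
      · intro h y hy hA
        exact ((ihB y).1).mpr (h y hy (((ihA y).1).mp hA))
    · constructor
      · intro h y hy hA
        exact ((ihB y).2).mp (h y hy (((ihA y).2).mpr hA))
      · intro h y hy hA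
        exact ((ihB y).2).mpr (h y hy (((ihA y).2).mp hA))
  | box A ih =>
    constructor
    · constructor
      · intro h x' hx' y hy
        obtain ⟨z, hz, hle⟩ := hdc x x' y hx' hy
        exact ((ih y).1).mp (force_mono M hfc hdc A z y hle (h z hz))
      · intro h y hy
        exact ((ih y).1).mpr (h x (M.le_refl x) y hy)
    · constructor
      · intro h x' hx' y hy
        obtain ⟨z, hz, hle⟩ := hdc x x' y hx' hy
        exact ((ih y).2).mp (force_mono M hfc hdc A z y hle (h z hz))
      · intro h y hy
        exact ((ih y).2).mpr (h x (M.le_refl x) y hy)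
  | dia A ih =>
    constructor
    · constructor
      · rintro ⟨y, hy, hA⟩; exact ⟨y, hy, ((ih y).1).mp hA⟩
      · rintro ⟨y, hy, hA⟩; exact ⟨y, hy, ((ih y).1).mpr hA⟩
    · constructor
      · rintro ⟨y, hy, hA⟩ x' hx'
        obtain ⟨y', hy', hle⟩ := hfc x x' y hx' hy
        exact ⟨y', hy', ((ih y').2).mp (force_mono M hfc hdc A y y' hle hA)⟩
      · intro h
        obtain ⟨y, hy, hA⟩ := h x (M.le_refl x)
        exact ⟨y, hy, ((ih y).2).mpr hA⟩
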